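/- arXiv:2510.12312 — 4 statements merged into one kernel-verified Lean document; each statement's English description precedes it below -/
import Mathlib

section
/- Let M = ⟨S, A, P, R, γ⟩ be a finite MDP with γ ∈ [0,1), let 1 < C < 2, and let π₀ be a policy with full support (π₀(a|s) > 0 for all s ∈ S, a ∈ A). Let (μₙ)ₙ≥0 be probability distributions on S with μₙ(s) > 0 for all s, and let (πₙ)ₙ≥0 be a sequence of policies such that for every n, π_{n+1} ∈ N^C(πₙ) and Σ_s μₙ(s) Σ_a π_{n+1}(a|s) A^{πₙ}(s,a) ≥ Σ_s μₙ(s) Σ_a π'(a|s) A^{πₙ}(s,a) for every policy π' ∈ N^C(πₙ). Then the value functions improve monotonically: V^{π_{n+1}}(s) ≥ V^{πₙ}(s) for every n ≥ 0 and every s ∈ S. -/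
open Finset

variable {S A : Type*} [Fintype S] [Fintype A]

/-- A (stationary, stochastic) policy: for every state, a probability
distribution over actions. -/
def IsPolicy (π : S → A → ℝ) : Prop :=
  ∀ s, (∀ a, 0 ≤ π s a) ∧ (∑ a, π s a) = 1

/-- The neighborhood `N^C(π)`: policies `π'` with the same supports as `π`
whose importance ratios lie in `[2 - C, C]`. -/
def InNbhd (C : ℝ) (π π' : S → A → ℝ) : Prop :=
  IsPolicy π' ∧ (∀ s a, (0 < π s a ↔ 0 < π' s a)) ∧
    ∀ s a, 0 < π s a → (2 - C ≤ π' s a / π s a ∧ π' s a / π s a ≤ C)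

/-!
If `π'` has nonnegative expected advantage `∑ₐ π'(a|s) A(s,a)` over `V^π` at every state, then
`D = V^{π'} - V^π` satisfies `D ≥ γ P_{π'} D`, and at a state where `D` is minimal this forces
`D ≥ 0` since `γ < 1`. The expected advantage of `π_{n+1}` is nonnegative at every state `s`:
otherwise resetting `π_{n+1}` to `π_n` at `s` alone stays in `N^C(π_n)` (the ratio there is
`1 ∈ [2 - C, C]`), has expected advantage `0` at `s`, and so strictly increases the `μ_n`-weighted
objective that `π_{n+1}` maximizes.
-/

def advantage (P : S → A → S → ℝ) (R : S → A → ℝ) (γ : ℝ) (V : S → ℝ) (s : S) (a : A) : ℝ :=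
  R s a + γ * (∑ s', P s a s' * V s') - V s

def IsValueFunction (P : S → A → S → ℝ) (R : S → A → ℝ) (γ : ℝ) (π : S → A → ℝ)
    (V : S → ℝ) : Prop :=
  ∀ s, V s = ∑ a, π s a * (R s a + γ * ∑ s', P s a s' * V s')

variable {P : S → A → S → ℝ} {R : S → A → ℝ} {γ : ℝ}

omit [Fintype S] in
theorem IsPolicy.sum_mul_const {π : S → A → ℝ} (hπ : IsPolicy π) (s : S) (c : ℝ) :
    ∑ a, π s a * c = c := by
  rw [← sum_mul, (hπ s).2, one_mul]

omit [Fintype S] in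
theorem IsPolicy.le_sum_mul {π : S → A → ℝ} (hπ : IsPolicy π) {s : S} {c : ℝ} {f : A → ℝ}
    (h : ∀ a, c ≤ f a) : c ≤ ∑ a, π s a * f a :=
  calc c = ∑ a, π s a * c := (hπ.sum_mul_const s c).symm
    _ ≤ ∑ a, π s a * f a := sum_le_sum fun a _ => mul_le_mul_of_nonneg_left (h a) ((hπ s).1 a)

omit [Fintype S] in
theorem InNbhd.update_self [DecidableEq S] {C : ℝ} {π π' : S → A → ℝ} (h : InNbhd C π π')
    (hπ : IsPolicy π) (hC : 1 ≤ C) (s : S) : InNbhd C π (Function.update π' s (π s)) := by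
  refine ⟨fun t => ?_, fun t a => ?_, fun t a hta => ?_⟩ <;> rcases eq_or_ne t s with rfl | hts
  · simpa using hπ t
  · simpa [hts] using h.1 t
  · simp
  · simpa [hts] using h.2.1 t a
  · simp only [Function.update_self, div_self hta.ne']
    constructor <;> linarith
  · simpa [hts] using h.2.2 t a hta

omit [Fintype A] in
theorem nonneg_of_sum_mul_update_le [DecidableEq S] {μ : S → ℝ} {g : S → (A → ℝ) → ℝ}
    {σ : S → A → ℝ} {s : S} {τ : A → ℝ} (hμ : 0 < μ s) (hτ : g s τ = 0)
    (hle : ∑ t, μ t * g t (Function.update σ s τ t) ≤ ∑ t, μ t * g t (σ t)) :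
    0 ≤ g s (σ s) := by
  rw [Fintype.sum_eq_add_sum_compl s, Fintype.sum_eq_add_sum_compl s (fun t => μ t * g t (σ t)),
    Function.update_self, hτ] at hle
  have hcompl : ∑ t ∈ {s}ᶜ, μ t * g t (Function.update σ s τ t) = ∑ t ∈ {s}ᶜ, μ t * g t (σ t) :=
    sum_congr rfl fun t ht => by rw [Function.update_of_ne (by simpa using ht)]
  rw [hcompl] at hle
  exact (mul_nonneg_iff_of_pos_left hμ).1 (by linarith)

theorem sum_mul_advantage_self {π : S → A → ℝ} {V : S → ℝ} (hπ : IsPolicy π)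
    (hV : IsValueFunction P R γ π V) (s : S) : ∑ a, π s a * advantage P R γ V s a = 0 := by
  simp only [advantage, mul_sub, sum_sub_distrib, hπ.sum_mul_const]
  rw [← hV s, sub_self]

theorem sub_eq_sum_mul_advantage_add {π' : S → A → ℝ} {V' : S → ℝ} (hπ' : IsPolicy π')
    (hV' : IsValueFunction P R γ π' V') (V : S → ℝ) (s : S) :
    V' s - V s = ∑ a, π' s a * advantage P R γ V s a +
      γ * ∑ a, π' s a * ∑ s', P s a s' * (V' s' - V s') := by
  conv_lhs => rw [hV' s, ← hπ'.sum_mul_const s (V s), ← sum_sub_distrib]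
  rw [mul_sum, ← sum_add_distrib]
  refine sum_congr rfl fun a _ => ?_
  simp only [advantage, mul_sub, sum_sub_distrib]
  ring

/-- `IsPolicy` is row-stochasticity, so `∀ s, IsPolicy (P s)` says that `P` is a transition
kernel. -/
theorem nonneg_of_discounted_le (hP : ∀ s, IsPolicy (P s)) {π : S → A → ℝ} (hπ : IsPolicy π)
    (hγ₀ : 0 ≤ γ) (hγ₁ : γ < 1) {D : S → ℝ}
    (hD : ∀ s, γ * ∑ a, π s a * ∑ s', P s a s' * D s' ≤ D s) (s : S) : 0 ≤ D s := by
  obtain ⟨s₀, -, hmin⟩ := exists_min_image univ D ⟨s, mem_univ s⟩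
  have hmin : ∀ t, D s₀ ≤ D t := fun t => hmin t (mem_univ t)
  have hmean : D s₀ ≤ ∑ a, π s₀ a * ∑ s', P s₀ a s' * D s' :=
    hπ.le_sum_mul fun a => (hP s₀).le_sum_mul hmin
  have hs₀ : 0 ≤ D s₀ := by nlinarith [mul_le_mul_of_nonneg_left hmean hγ₀, hD s₀]
  exact hs₀.trans (hmin s)

theorem le_of_sum_mul_advantage_nonneg (hP : ∀ s, IsPolicy (P s)) (hγ₀ : 0 ≤ γ) (hγ₁ : γ < 1)
    {π' : S → A → ℝ} {V V' : S → ℝ} (hπ' : IsPolicy π') (hV' : IsValueFunction P R γ π' V')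
    (hadv : ∀ s, 0 ≤ ∑ a, π' s a * advantage P R γ V s a) (s : S) : V s ≤ V' s := by
  refine sub_nonneg.1 (nonneg_of_discounted_le (D := fun t => V' t - V t) hP hπ' hγ₀ hγ₁
    (fun t => ?_) s)
  linarith [sub_eq_sum_mul_advantage_add hπ' hV' V t, hadv t]

theorem policy_improvement_monotone_general
    (P : S → A → S → ℝ)
    (hP : ∀ s a, (∀ s', 0 ≤ P s a s') ∧ (∑ s', P s a s') = 1)
    (R : S → A → ℝ) (γ : ℝ) (hγ : 0 ≤ γ ∧ γ < 1)
    (C : ℝ) (hC : 1 < C ∧ C < 2)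
    (π : ℕ → S → A → ℝ)
    (hπ0 : IsPolicy (π 0))
    (μ : ℕ → S → ℝ)
    (hμ : ∀ n, (∀ s, 0 < μ n s) ∧ (∑ s, μ n s) = 1)
    (V : ℕ → S → ℝ)
    (hV : ∀ n s, V n s = ∑ a, π n s a * (R s a + γ * ∑ s', P s a s' * V n s'))
    (hnb : ∀ n, InNbhd C (π n) (π (n + 1)))
    (hopt : ∀ n (π' : S → A → ℝ), InNbhd C (π n) π' →
      (∑ s, μ n s * ∑ a, π' s a * (R s a + γ * (∑ s', P s a s' * V n s') - V n s)) ≤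
      (∑ s, μ n s * ∑ a, π (n + 1) s a * (R s a + γ * (∑ s', P s a s' * V n s') - V n s))) :
    ∀ n s, V n s ≤ V (n + 1) s := by
  classical
  have hpol : ∀ n, IsPolicy (π n)
    | 0 => hπ0
    | n + 1 => (hnb n).1
  intro n
  refine le_of_sum_mul_advantage_nonneg hP hγ.1 hγ.2 (hpol (n + 1)) (hV (n + 1)) fun s => ?_
  exact nonneg_of_sum_mul_update_le (g := fun t p => ∑ a, p a * advantage P R γ (V n) t a)
    ((hμ n).1 s) (sum_mul_advantage_self (hpol n) (hV n) s)
    (hopt n _ ((hnb n).update_self (hpol n) hC.1.le s))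

/-- monotonic policy improvement for updates constrained to the
neighborhood `N^C`. -/
theorem policy_improvement_monotone
    [Nonempty S] [Nonempty A]
    (P : S → A → S → ℝ)
    (hP : ∀ s a, (∀ s', 0 ≤ P s a s') ∧ (∑ s', P s a s') = 1)
    (R : S → A → ℝ) (γ : ℝ) (hγ : 0 ≤ γ ∧ γ < 1)
    (C : ℝ) (hC : 1 < C ∧ C < 2)
    (π : ℕ → S → A → ℝ)
    (hπ0 : IsPolicy (π 0)) (hfull : ∀ s a, 0 < π 0 s a)
    (μ : ℕ → S → ℝ)
    (hμ : ∀ n, (∀ s, 0 < μ n s) ∧ (∑ s, μ n s) = 1)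
    (V : ℕ → S → ℝ)
    (hV : ∀ n s, V n s = ∑ a, π n s a * (R s a + γ * ∑ s', P s a s' * V n s'))
    (hnb : ∀ n, InNbhd C (π n) (π (n + 1)))
    (hopt : ∀ n (π' : S → A → ℝ), InNbhd C (π n) π' →
      (∑ s, μ n s * ∑ a, π' s a * (R s a + γ * (∑ s', P s a s' * V n s') - V n s)) ≤
      (∑ s, μ n s * ∑ a, π (n + 1) s a * (R s a + γ * (∑ s', P s a s' * V n s') - V n s))) :
    ∀ n s, V n s ≤ V (n + 1) s :=
  policy_improvement_monotone_general P hP R γ hγ C hC π hπ0 μ hμ V hV hnb hopt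
end

section
/- Let S and A be nonempty finite sets and 1 < C < 2. Let π, πₙ, π' be policies such that supp πₙ(·|s) = supp π(·|s) = supp π'(·|s) for all s ∈ S, and π' ∈ N^C(π). Set π_min = min{π(a|s) : s ∈ S, a ∈ supp π(·|s)} and δ = ‖πₙ − π‖∞, and assume δ ≤ π_min/2. Define ε' = 2Cδ/(π_min(C − 1) + 2Cδ) and the mixture π''(a|s) = (1 − ε')π'(a|s) + ε'πₙ(a|s). Then π'' is a policy and π'' ∈ N^C(πₙ); in particular, 2 − C ≤ π''(a|s)/πₙ(a|s) ≤ C for every s ∈ S and a ∈ supp πₙ(·|s). -/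
open Finset

variable {S A : Type*} [Fintype S] [Fintype A]

/-- the mixture `π'' = (1 − ε')π' + ε'πₙ`, with
`ε' = 2Cδ/(π_min(C − 1) + 2Cδ)`, is a policy belonging to `N^C(πₙ)` whenever
`π' ∈ N^C(π)`, all three policies share supports, and `δ = ‖πₙ − π‖∞ ≤ π_min/2`. -/
theorem mixture_in_neighborhood
    [Nonempty S] [Nonempty A]
    (C : ℝ) (hC : 1 < C ∧ C < 2)
    (π πn π' : S → A → ℝ)
    (hπ : IsPolicy π) (hπn : IsPolicy πn) (hπ' : IsPolicy π')
    (hsupp : ∀ s a, (0 < πn s a ↔ 0 < π s a) ∧ (0 < π' s a ↔ 0 < π s a))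
    (hmem : InNbhd C π π')
    (hne : ((Finset.univ : Finset (S × A)).filter (fun p => 0 < π p.1 p.2)).Nonempty)
    (πmin δ : ℝ)
    (hπmin : πmin = ((Finset.univ : Finset (S × A)).filter
      (fun p => 0 < π p.1 p.2)).inf' hne (fun p => π p.1 p.2))
    (hδ : δ = (Finset.univ : Finset (S × A)).sup' Finset.univ_nonempty
      (fun p => |πn p.1 p.2 - π p.1 p.2|))
    (hδsmall : δ ≤ πmin / 2)
    (ε' : ℝ) (hε' : ε' = 2 * C * δ / (πmin * (C - 1) + 2 * C * δ))
    (π'' : S → A → ℝ)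
    (hπ'' : ∀ s a, π'' s a = (1 - ε') * π' s a + ε' * πn s a) :
    IsPolicy π'' ∧ InNbhd C πn π'' := by
  obtain ⟨hC1, hC2⟩ := hC
  have hCm1 : (0:ℝ) < C - 1 := by linarith
  have h2mC : (0:ℝ) < 2 - C := by linarith
  -- πmin positive
  have hπminpos : 0 < πmin := by
    rw [hπmin]
    refine (Finset.lt_inf'_iff _).mpr fun p hp => (Finset.mem_filter.mp hp).2
  -- δ nonneg
  have habs : ∀ s a, |πn s a - π s a| ≤ δ := by
    intro s a
    rw [hδ]
    exact Finset.le_sup' (fun p : S × A => |πn p.1 p.2 - π p.1 p.2|) (Finset.mem_univ (s, a))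
  have hδ0 : 0 ≤ δ := le_trans (abs_nonneg _) (habs (Classical.arbitrary S) (Classical.arbitrary A))
  have hπge : ∀ s a, 0 < π s a → πmin ≤ π s a := by
    intro s a h
    rw [hπmin]
    exact Finset.inf'_le (fun p : S × A => π p.1 p.2) (Finset.mem_filter.mpr ⟨Finset.mem_univ (s, a), h⟩)
  have hDpos : 0 < πmin * (C - 1) + 2 * C * δ := by
    have : 0 < πmin * (C - 1) := mul_pos hπminpos hCm1
    nlinarith
  have hε'0 : 0 ≤ ε' := by
    rw [hε']
    apply div_nonneg _ hDpos.le
    nlinarith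
  have h1mε' : 0 < 1 - ε' := by
    rw [hε']
    rw [sub_pos, div_lt_one hDpos]
    nlinarith
  have key : (1 - ε') * (C * δ) = ε' * ((C - 1) * (πmin / 2)) := by
    rw [hε']
    field_simp
    ring
  obtain ⟨_, hmem2, hmem3⟩ := hmem
  -- π'' is a policy
  have hpol : IsPolicy π'' := by
    intro s
    constructor
    · intro a
      rw [hπ'' s a]
      have := (hπ' s).1 a
      have := (hπn s).1 a
      nlinarith
    · have h1 := (hπ' s).2
      have h2 := (hπn s).2
      calc ∑ a, π'' s a = ∑ a, ((1 - ε') * π' s a + ε' * πn s a) := by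
            exact Finset.sum_congr rfl (fun a _ => hπ'' s a)
        _ = (1 - ε') * (∑ a, π' s a) + ε' * (∑ a, πn s a) := by
            rw [Finset.sum_add_distrib, Finset.mul_sum, Finset.mul_sum]
        _ = 1 := by rw [h1, h2]; ring
  refine ⟨hpol, hpol, ?_, ?_⟩
  · intro s a
    constructor
    · intro h
      have hπpos : 0 < π s a := (hsupp s a).1.mp h
      have hπ'pos : 0 < π' s a := (hsupp s a).2.mpr hπpos
      rw [hπ'' s a]
      have := (hπn s).1 a
      nlinarith
    · intro h
      by_contra hn
      have hπn0 : πn s a = 0 := le_antisymm (not_lt.mp hn) ((hπn s).1 a)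
      have hπ0 : π s a = 0 := by
        by_contra hx
        exact hn ((hsupp s a).1.mpr (lt_of_le_of_ne ((hπ s).1 a) (Ne.symm hx)))
      have hπ'0 : π' s a = 0 := by
        by_contra hx
        have := (hsupp s a).2.mp (lt_of_le_of_ne ((hπ' s).1 a) (Ne.symm hx))
        linarith
      rw [hπ'' s a, hπn0, hπ'0] at h
      linarith [h]
  · intro s a h
    have hπpos : 0 < π s a := (hsupp s a).1.mp h
    have hπminle : πmin ≤ π s a := hπge s a hπpos
    have habs' := abs_le.mp (habs s a)
    have hπnlb : πmin / 2 ≤ πn s a := by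
      cases habs' with
      | intro h1 h2 => linarith
    obtain ⟨hr1, hr2⟩ := hmem3 s a hπpos
    have hπ'le : π' s a ≤ C * π s a := by
      rw [div_le_iff₀ hπpos] at hr2; linarith [hr2]
    have hπ'ge : (2 - C) * π s a ≤ π' s a := by
      rw [le_div_iff₀ hπpos] at hr1; linarith [hr1]
    have hub : π'' s a ≤ C * πn s a := by
      rw [hπ'' s a]
      have h1 : π s a ≤ πn s a + δ := by linarith [habs'.2]
      nlinarith [key, mul_le_mul_of_nonneg_left hπ'le h1mε'.le,
        mul_le_mul_of_nonneg_left h1 (mul_nonneg h1mε'.le (by linarith : (0:ℝ) ≤ C)),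
        mul_le_mul_of_nonneg_left hπnlb (mul_nonneg hε'0 hCm1.le)]
    have hlb : (2 - C) * πn s a ≤ π'' s a := by
      rw [hπ'' s a]
      have h1 : πn s a - δ ≤ π s a := by linarith [habs'.1]
      nlinarith [key, mul_le_mul_of_nonneg_left hπ'ge h1mε'.le,
        mul_le_mul_of_nonneg_left h1 (mul_nonneg h1mε'.le h2mC.le),
        mul_le_mul_of_nonneg_left hπnlb (mul_nonneg hε'0 hCm1.le),
        mul_le_mul_of_nonneg_left (show 2 - C ≤ C by linarith) (mul_nonneg h1mε'.le hδ0)]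
    constructor
    · rw [le_div_iff₀ h]; linarith
    · rw [div_le_iff₀ h]; linarith
end

section
/- Let S and A be nonempty finite sets and 1 < C < 2. Let (πₙ) and (π'ₙ) be sequences of policies with π'ₙ ∈ N^C(πₙ) for all n, and let π, π' be policies such that ‖πₙ − π‖∞ → 0 and ‖π'ₙ − π'‖∞ → 0, and such that for all sufficiently large n and all s ∈ S, supp πₙ(·|s) = supp π(·|s) and supp π'ₙ(·|s) = supp π'(·|s). Then π' ∈ N^C(π). (Upper hemicontinuity of the neighborhood operator N^C.) -/
open Finset

variable {S A : Type*} [Fintype S] [Fintype A]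

/-- upper hemicontinuity of the neighborhood operator `N^C`.
Convergence of policies is in the standard topology of the finite product
`ℝ^{S×A}`, which is that of the supremum metric. -/
theorem neighborhood_upper_hemicontinuous
    [Nonempty S] [Nonempty A]
    (C : ℝ) (hC : 1 < C ∧ C < 2)
    (πseq π'seq : ℕ → S → A → ℝ) (π π' : S → A → ℝ)
    (hpolseq : ∀ n, IsPolicy (πseq n))
    (hπ : IsPolicy π) (hπ' : IsPolicy π')
    (hmem : ∀ n, InNbhd C (πseq n) (π'seq n))
    (hconv : Filter.Tendsto πseq Filter.atTop (nhds π))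
    (hconv' : Filter.Tendsto π'seq Filter.atTop (nhds π'))
    (hsupp : ∃ N, ∀ n ≥ N, ∀ s a,
      (0 < πseq n s a ↔ 0 < π s a) ∧ (0 < π'seq n s a ↔ 0 < π' s a)) :
    InNbhd C π π' := by
  obtain ⟨N, hN⟩ := hsupp
  refine ⟨hπ', ?_, ?_⟩
  · intro s a
    have h1 := (hN N le_rfl s a).1
    have h2 := (hN N le_rfl s a).2
    have h3 := (hmem N).2.1 s a
    tauto
  · intro s a hsa
    have h1 : Filter.Tendsto (fun n => πseq n s a) Filter.atTop (nhds (π s a)) :=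
      tendsto_pi_nhds.1 (tendsto_pi_nhds.1 hconv s) a
    have h2 : Filter.Tendsto (fun n => π'seq n s a) Filter.atTop (nhds (π' s a)) :=
      tendsto_pi_nhds.1 (tendsto_pi_nhds.1 hconv' s) a
    have hdiv : Filter.Tendsto (fun n => π'seq n s a / πseq n s a) Filter.atTop
        (nhds (π' s a / π s a)) := h2.div h1 (ne_of_gt hsa)
    have hev : ∀ᶠ n in Filter.atTop,
        2 - C ≤ π'seq n s a / πseq n s a ∧ π'seq n s a / πseq n s a ≤ C := by
      filter_upwards [Filter.eventually_atTop.2 ⟨N, fun n hn => hn⟩] with n hn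
      exact (hmem n).2.2 s a (((hN n hn s a).1).2 hsa)
    constructor
    · exact le_of_tendsto_of_tendsto tendsto_const_nhds hdiv
        (hev.mono fun n h => h.1)
    · exact le_of_tendsto_of_tendsto hdiv tendsto_const_nhds
        (hev.mono fun n h => h.2)
end

section
/- Let (X, d) be a metric space equipped with its Borel σ-algebra, γ ∈ [0,1), and K_R, K_P ≥ 0 with γ·K_P < 1. Let P be a Markov kernel from X to X and r : X → ℝ a bounded measurable function with |r(x) − r(y)| ≤ K_R·d(x, y) for all x, y. Assume the transitions are K_P-Lipschitz in the dual sense: for every bounded measurable f : X → ℝ that is Lipschitz with constant 1, |∫ f d(P(x)) − ∫ f d(P(y))| ≤ K_P·d(x, y) for all x, y ∈ X. If V : X → ℝ is a bounded measurable function satisfying the Bellman equation V(x) = r(x) + γ·∫ V d(P(x)) for all x ∈ X, then V is Lipschitz with constant K_R/(1 − γ·K_P): |V(x) − V(y)| ≤ (K_R/(1 − γ·K_P))·d(x, y) for all x, y ∈ X. -/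
open MeasureTheory

/-- Key step: one application of the Bellman operator improves the
"Lipschitz up to additive constant" estimate. -/
lemma bellman_step
    {X : Type*} [MetricSpace X] [MeasurableSpace X] [BorelSpace X]
    (γ KR KP : ℝ) (hγ0 : 0 ≤ γ) (hKP : 0 ≤ KP)
    (P : ProbabilityTheory.Kernel X X) [ProbabilityTheory.IsMarkovKernel P]
    (r : X → ℝ)
    (hrLip : ∀ x y, |r x - r y| ≤ KR * dist x y)
    (hPLip : ∀ f : X → ℝ, Measurable f → (∃ Cf, ∀ x, |f x| ≤ Cf) →
      LipschitzWith 1 f →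
      ∀ x y, |(∫ z, f z ∂(P x)) - ∫ z, f z ∂(P y)| ≤ KP * dist x y)
    (V : X → ℝ) (hVmeas : Measurable V)
    (CV : ℝ) (hVb : ∀ x, |V x| ≤ CV)
    (hBell : ∀ x, V x = r x + γ * ∫ z, V z ∂(P x))
    (a b : ℝ) (ha : 0 ≤ a) (hb : 0 ≤ b)
    (IH : ∀ u v, |V u - V v| ≤ a + b * dist u v) :
    ∀ u v, |V u - V v| ≤ γ * a + (KR + γ * (KP * b)) * dist u v := by
  -- integrability of bounded measurable functions against P w
  have hint : ∀ (f : X → ℝ), Measurable f → ∀ C : ℝ, (∀ z, |f z| ≤ C) →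
      ∀ w : X, Integrable f (P w) := by
    intro f hf C hC w
    exact (integrable_const C).mono' hf.aestronglyMeasurable
      (Filter.Eventually.of_forall fun z => by simpa [Real.norm_eq_abs] using hC z)
  -- the central estimate on integrals of V
  have hkey : ∀ u v, |(∫ z, V z ∂(P u)) - ∫ z, V z ∂(P v)| ≤ a + KP * b * dist u v := by
    intro u v
    rcases eq_or_lt_of_le hb with hb0 | hbpos
    · -- b = 0 : V oscillates by at most a
      have hosc : ∀ z w : X, V z ≤ V w + a := by
        intro z w
        have h := IH z w
        rw [← hb0] at h
        have := (abs_le.mp (by simpa using h)).2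
        linarith
      have h1 : ∀ (p q : X), (∫ z, V z ∂(P p)) ≤ (∫ z, V z ∂(P q)) + a := by
        intro p q
        have hup : ∀ w : X, (∫ z, V z ∂(P p)) ≤ V w + a := by
          intro w
          calc (∫ z, V z ∂(P p)) ≤ ∫ _z, (V w + a) ∂(P p) :=
                integral_mono (hint V hVmeas CV hVb p) (integrable_const _)
                  (fun z => hosc z w)
            _ = V w + a := by simp
        calc (∫ z, V z ∂(P p)) = ∫ _w, (∫ z, V z ∂(P p)) ∂(P q) := by simp
          _ ≤ ∫ w, (V w + a) ∂(P q) :=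
              integral_mono (integrable_const _)
                ((hint V hVmeas CV hVb q).add (integrable_const _)) hup
          _ = (∫ z, V z ∂(P q)) + a := by
              rw [integral_add (hint V hVmeas CV hVb q) (integrable_const _)]; simp
      have h2 := h1 u v
      have h3 := h1 v u
      have hd : 0 ≤ dist u v := dist_nonneg
      rw [abs_le]
      constructor <;> nlinarith [mul_nonneg (mul_nonneg hKP hb) hd]
    · -- b > 0 : use the b-Lipschitz lower envelope of V
      haveI : Nonempty X := ⟨u⟩
      set g : X → ℝ := fun z => ⨅ w, (V w + b * dist z w) with hg
      have hbdd : ∀ z : X, BddBelow (Set.range fun w => V w + b * dist z w) := by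
        intro z
        refine ⟨-CV, ?_⟩
        rintro t ⟨w, rfl⟩
        have := (abs_le.mp (hVb w)).1
        have := mul_nonneg hb (dist_nonneg (x := z) (y := w))
        dsimp only
        linarith
      have hgleV : ∀ z, g z ≤ V z := by
        intro z
        have := ciInf_le (hbdd z) z
        simpa using this
      have hVleg : ∀ z, V z ≤ g z + a := by
        intro z
        have : V z - a ≤ g z := by
          refine le_ciInf fun w => ?_
          have := (abs_le.mp (IH z w)).2
          linarith
        linarith
      have hgLip1 : ∀ z1 z2 : X, g z1 ≤ g z2 + b * dist z1 z2 := by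
        intro z1 z2
        have : g z1 - b * dist z1 z2 ≤ g z2 := by
          refine le_ciInf fun w => ?_
          have h1 : g z1 ≤ V w + b * dist z1 w := ciInf_le (hbdd z1) w
          have h2 : dist z1 w ≤ dist z1 z2 + dist z2 w := dist_triangle _ _ _
          nlinarith
        linarith
      have hgLipd : ∀ z1 z2 : X, |g z1 - g z2| ≤ b * dist z1 z2 := by
        intro z1 z2
        have h1 := hgLip1 z1 z2
        have h2 := hgLip1 z2 z1
        rw [dist_comm] at h2
        rw [abs_le]; constructor <;> linarith
      have hgb : ∀ z, |g z| ≤ CV + a := by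
        intro z
        have h1 := hgleV z
        have h2 := hVleg z
        have h3 := abs_le.mp (hVb z)
        rw [abs_le]; constructor <;> [linarith [h3.1]; linarith [h3.2]]
      have hgLipW : LipschitzWith b.toNNReal g := by
        refine LipschitzWith.of_dist_le_mul fun z1 z2 => ?_
        rw [Real.dist_eq]
        have := hgLipd z1 z2
        rwa [Real.coe_toNNReal _ hb]
      have hgmeas : Measurable g := hgLipW.continuous.measurable
      -- scaled function f = b⁻¹ • g is 1-Lipschitz
      set f : X → ℝ := fun z => b⁻¹ * g z with hf
      have hfmeas : Measurable f := (measurable_const.mul hgmeas)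
      have hfb : ∀ z, |f z| ≤ b⁻¹ * (CV + a) := by
        intro z
        rw [hf, abs_mul, abs_of_nonneg (inv_nonneg.mpr hb)]
        exact mul_le_mul_of_nonneg_left (hgb z) (inv_nonneg.mpr hb)
      have hfLip : LipschitzWith 1 f := by
        refine LipschitzWith.of_dist_le_mul fun z1 z2 => ?_
        rw [Real.dist_eq]
        have : f z1 - f z2 = b⁻¹ * (g z1 - g z2) := by rw [hf]; ring
        rw [this, abs_mul, abs_of_nonneg (inv_nonneg.mpr hb)]
        calc b⁻¹ * |g z1 - g z2| ≤ b⁻¹ * (b * dist z1 z2) :=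
              mul_le_mul_of_nonneg_left (hgLipd z1 z2) (inv_nonneg.mpr hb)
          _ = dist z1 z2 := by field_simp
          _ ≤ 1 * dist z1 z2 := by rw [one_mul]
      have hPf := hPLip f hfmeas ⟨b⁻¹ * (CV + a), hfb⟩ hfLip u v
      -- translate back to g
      have hintf : ∀ w : X, ∫ z, f z ∂(P w) = b⁻¹ * ∫ z, g z ∂(P w) := by
        intro w
        rw [hf]
        exact integral_const_mul _ _
      have hPg : |(∫ z, g z ∂(P u)) - ∫ z, g z ∂(P v)| ≤ b * (KP * dist u v) := by
        have h := hPf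
        rw [hintf u, hintf v, ← mul_sub, abs_mul, abs_of_nonneg (inv_nonneg.mpr hb)] at h
        calc |(∫ z, g z ∂(P u)) - ∫ z, g z ∂(P v)|
            = b * (b⁻¹ * |(∫ z, g z ∂(P u)) - ∫ z, g z ∂(P v)|) := by field_simp
          _ ≤ b * (KP * dist u v) := mul_le_mul_of_nonneg_left h hb
      -- compare ∫ V with ∫ g
      have hcmp : ∀ w : X, (∫ z, g z ∂(P w)) ≤ (∫ z, V z ∂(P w)) ∧
          (∫ z, V z ∂(P w)) ≤ (∫ z, g z ∂(P w)) + a := by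
        intro w
        have hig := hint g hgmeas (CV + a) hgb w
        have hiV := hint V hVmeas CV hVb w
        constructor
        · exact integral_mono hig hiV hgleV
        · calc (∫ z, V z ∂(P w)) ≤ ∫ z, (g z + a) ∂(P w) :=
              integral_mono hiV (hig.add (integrable_const _)) hVleg
            _ = (∫ z, g z ∂(P w)) + a := by
                rw [integral_add hig (integrable_const _)]; simp
      obtain ⟨hu1, hu2⟩ := hcmp u
      obtain ⟨hv1, hv2⟩ := hcmp v
      have hgabs := abs_le.mp hPg
      rw [abs_le]
      constructor <;> [nlinarith [hgabs.1]; nlinarith [hgabs.2]]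
  -- combine via Bellman equation
  intro u v
  rw [hBell u, hBell v]
  have h1 := hrLip u v
  have h2 := hkey u v
  have h3 : r u + γ * (∫ z, V z ∂(P u)) - (r v + γ * (∫ z, V z ∂(P v)))
      = (r u - r v) + γ * ((∫ z, V z ∂(P u)) - (∫ z, V z ∂(P v))) := by ring
  rw [h3]
  calc |(r u - r v) + γ * ((∫ z, V z ∂(P u)) - (∫ z, V z ∂(P v)))|
      ≤ |r u - r v| + |γ * ((∫ z, V z ∂(P u)) - (∫ z, V z ∂(P v)))| := abs_add_le _ _
    _ ≤ KR * dist u v + γ * (a + KP * b * dist u v) := by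
        refine add_le_add h1 ?_
        rw [abs_mul, abs_of_nonneg hγ0]
        exact mul_le_mul_of_nonneg_left h2 hγ0
    _ = γ * a + (KR + γ * (KP * b)) * dist u v := by ring

/-- a bounded measurable solution of the Bellman equation
`V = r + γ·P V`, with a `K_R`-Lipschitz reward and transitions that are
`K_P`-Lipschitz in the dual (Kantorovich) sense, is Lipschitz with constant
`K_R/(1 − γ·K_P)`. -/
theorem bellman_solution_lipschitz
    {X : Type*} [MetricSpace X] [MeasurableSpace X] [BorelSpace X]
    (γ : ℝ) (hγ : 0 ≤ γ ∧ γ < 1)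
    (KR KP : ℝ) (hKR : 0 ≤ KR) (hKP : 0 ≤ KP) (hγKP : γ * KP < 1)
    (P : ProbabilityTheory.Kernel X X) [ProbabilityTheory.IsMarkovKernel P]
    (r : X → ℝ) (hrmeas : Measurable r)
    (Cr : ℝ) (hrb : ∀ x, |r x| ≤ Cr)
    (hrLip : ∀ x y, |r x - r y| ≤ KR * dist x y)
    (hPLip : ∀ f : X → ℝ, Measurable f → (∃ Cf, ∀ x, |f x| ≤ Cf) →
      LipschitzWith 1 f →
      ∀ x y, |(∫ z, f z ∂(P x)) - ∫ z, f z ∂(P y)| ≤ KP * dist x y)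
    (V : X → ℝ) (hVmeas : Measurable V)
    (CV : ℝ) (hVb : ∀ x, |V x| ≤ CV)
    (hBell : ∀ x, V x = r x + γ * ∫ z, V z ∂(P x)) :
    ∀ x y, |V x - V y| ≤ (KR / (1 - γ * KP)) * dist x y := by
  intro x y
  obtain ⟨hγ0, hγ1⟩ := hγ
  have hCV0 : 0 ≤ CV := le_trans (abs_nonneg _) (hVb x)
  have h1 : 0 < 1 - γ * KP := by linarith
  set L : ℝ := KR / (1 - γ * KP) with hL
  have hL0 : 0 ≤ L := div_nonneg hKR h1.le
  have hLfix : KR + γ * (KP * L) = L := by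
    rw [hL]; field_simp; ring
  have main : ∀ n : ℕ, ∀ u v : X, |V u - V v| ≤ 2 * CV * γ ^ n + L * dist u v := by
    intro n
    induction n with
    | zero =>
      intro u v
      have := hVb u
      have := hVb v
      have := abs_sub_abs_le_abs_sub (V u) (V v)
      have habs : |V u - V v| ≤ |V u| + |V v| := abs_sub _ _
      have := mul_nonneg hL0 (dist_nonneg (x := u) (y := v))
      simp only [pow_zero, mul_one]
      linarith
    | succ n ih =>
      have step := bellman_step γ KR KP hγ0 hKP P r hrLip hPLip V hVmeas CV hVb hBell
        (2 * CV * γ ^ n) L (by positivity) hL0 ih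
      intro u v
      have := step u v
      rw [hLfix] at this
      calc |V u - V v| ≤ γ * (2 * CV * γ ^ n) + L * dist u v := this
        _ = 2 * CV * γ ^ (n + 1) + L * dist u v := by ring
  have hlim : Filter.Tendsto (fun n : ℕ => 2 * CV * γ ^ n + L * dist x y)
      Filter.atTop (nhds (L * dist x y)) := by
    have h := tendsto_pow_atTop_nhds_zero_of_lt_one hγ0 hγ1
    have := (h.const_mul (2 * CV)).add_const (L * dist x y)
    simpa using this
  exact ge_of_tendsto' hlim fun n => main n x y
end
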